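/- arXiv:2211.04981 — 4 statements merged into one kernel-verified Lean document; each statement's English description precedes it below -/
import Mathlib

section
/- Let ε ∈ (0,1] and set θ = √(2m/ε). Then every vertex v with d(v) > θ has at most ε·d(v) neighbors of degree greater than θ; consequently the number d_ℓ(v) of neighbors of v of degree at most θ satisfies d_ℓ(v) ≥ (1−ε)·d(v). -/
/-- Let `ε ∈ (0,1]` and set `θ = √(2m/ε)`. Then every vertex `v` with
`d(v) > θ` has at most `ε·d(v)` neighbors of degree greater than `θ`; consequently the
number `d_ℓ(v)` of neighbors of `v` of degree at most `θ` satisfies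
`d_ℓ(v) ≥ (1−ε)·d(v)`. -/
theorem heavy_neighbors_le_and_light_neighbors_ge {V : Type*} [Fintype V] [DecidableEq V]
    (G : SimpleGraph V) [DecidableRel G.Adj]
    (hn : 1 ≤ Fintype.card V) (hm : 1 ≤ G.edgeFinset.card)
    (ε : ℝ) (hε : ε ∈ Set.Ioc (0 : ℝ) 1)
    (θ : ℝ) (hθ : θ = Real.sqrt (2 * (G.edgeFinset.card : ℝ) / ε))
    (v : V) (hv : θ < (G.degree v : ℝ)) :
    (((G.neighborFinset v).filter fun w => θ < (G.degree w : ℝ)).card : ℝ)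
        ≤ ε * (G.degree v : ℝ) ∧
    (1 - ε) * (G.degree v : ℝ)
        ≤ (((G.neighborFinset v).filter fun w => (G.degree w : ℝ) ≤ θ).card : ℝ) := by
  obtain ⟨hε0, hε1⟩ := hε
  have hm' : (0:ℝ) < (G.edgeFinset.card : ℝ) := by exact_mod_cast hm
  have harg : (0:ℝ) < 2 * (G.edgeFinset.card : ℝ) / ε := by positivity
  have hθ0 : 0 < θ := hθ ▸ Real.sqrt_pos.mpr harg
  have hθsq : θ * θ = 2 * (G.edgeFinset.card : ℝ) / ε := by
    rw [hθ, Real.mul_self_sqrt harg.le]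
  set S := (G.neighborFinset v).filter fun w => θ < (G.degree w : ℝ) with hS
  -- sum of degrees over S ≤ 2m
  have hsum : ∑ w ∈ S, (G.degree w : ℝ) ≤ 2 * (G.edgeFinset.card : ℝ) := by
    have h1 : ∑ w ∈ S, (G.degree w : ℝ) ≤ ∑ w ∈ Finset.univ, (G.degree w : ℝ) :=
      Finset.sum_le_sum_of_subset_of_nonneg (Finset.subset_univ S)
        (fun i _ _ => by positivity)
    have h2 : ∑ w ∈ Finset.univ, (G.degree w) = 2 * G.edgeFinset.card := by
      simpa using G.sum_degrees_eq_twice_card_edges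
    calc ∑ w ∈ S, (G.degree w : ℝ) ≤ _ := h1
      _ = 2 * (G.edgeFinset.card : ℝ) := by exact_mod_cast h2
  have hlb : (S.card : ℝ) * θ ≤ ∑ w ∈ S, (G.degree w : ℝ) := by
    calc (S.card : ℝ) * θ = ∑ _w ∈ S, θ := by rw [Finset.sum_const, nsmul_eq_mul]
      _ ≤ ∑ w ∈ S, (G.degree w : ℝ) := Finset.sum_le_sum fun w hw =>
          (Finset.mem_filter.mp hw).2.le
  have hcard : (S.card : ℝ) ≤ ε * θ := by
    have h3 : (S.card : ℝ) * θ ≤ θ * θ * ε / θ * θ := by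
      rw [div_mul_cancel₀ _ hθ0.ne']
      calc (S.card : ℝ) * θ ≤ 2 * (G.edgeFinset.card : ℝ) := hlb.trans hsum
        _ = θ * θ * ε := by rw [hθsq]; field_simp
    have := le_of_mul_le_mul_right h3 hθ0
    calc (S.card : ℝ) ≤ θ * θ * ε / θ := this
      _ = ε * θ := by field_simp
  have hheavy : (S.card : ℝ) ≤ ε * (G.degree v : ℝ) :=
    hcard.trans (by nlinarith)
  refine ⟨hheavy, ?_⟩
  have hcompl : S.card + ((G.neighborFinset v).filter fun w => (G.degree w : ℝ) ≤ θ).card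
      = G.degree v := by
    rw [hS]
    have : ((G.neighborFinset v).filter fun w => (G.degree w : ℝ) ≤ θ)
        = (G.neighborFinset v).filter fun w => ¬ θ < (G.degree w : ℝ) := by
      apply Finset.filter_congr; intro w _; simp [not_lt]
    rw [this, Finset.card_filter_add_card_filter_not, SimpleGraph.card_neighborFinset_eq_degree]
  have : (S.card : ℝ) + (((G.neighborFinset v).filter fun w => (G.degree w : ℝ) ≤ θ).card : ℝ)
      = (G.degree v : ℝ) := by exact_mod_cast hcompl
  linarith
end

section
/- Set θ = ⌈√(6m)⌉. Then every heavy vertex v (i.e., with d(v) > θ) has at most (1/3)·d(v) heavy neighbors; consequently d_ℓ(v)/d(v) ≥ 2/3. -/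
/-- Set `θ = ⌈√(6m)⌉`. Then every heavy vertex `v` (i.e., with
`d(v) > θ`) has at most `(1/3)·d(v)` heavy neighbors; consequently
`d_ℓ(v)/d(v) ≥ 2/3`. -/
theorem heavy_neighbors_le_third {V : Type*} [Fintype V] [DecidableEq V]
    (G : SimpleGraph V) [DecidableRel G.Adj]
    (hn : 1 ≤ Fintype.card V) (hm : 1 ≤ G.edgeFinset.card)
    (θ : ℕ) (hθ : θ = ⌈Real.sqrt (6 * (G.edgeFinset.card : ℝ))⌉₊)
    (v : V) (hv : θ < G.degree v) :
    (((G.neighborFinset v).filter fun w => θ < G.degree w).card : ℝ)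
        ≤ (1 / 3 : ℝ) * (G.degree v : ℝ) ∧
    (2 / 3 : ℝ)
        ≤ (((G.neighborFinset v).filter fun w => G.degree w ≤ θ).card : ℝ)
            / (G.degree v : ℝ) := by
  set m := G.edgeFinset.card with hmdef
  -- θ² ≥ 6m
  have hsqrt : Real.sqrt (6 * (m : ℝ)) ≤ (θ : ℝ) := by
    rw [hθ]; exact Nat.le_ceil _
  have hθ2 : 6 * m ≤ θ ^ 2 := by
    have h6 : (6 * m : ℝ) ≤ (θ : ℝ) ^ 2 := by
      have := Real.sq_sqrt (by positivity : (0:ℝ) ≤ 6 * (m:ℝ))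
      nlinarith [Real.sqrt_nonneg (6 * (m:ℝ))]
    exact_mod_cast h6
  -- heavy vertices
  set S := Finset.univ.filter (fun w => θ < G.degree w) with hS
  have hcard : S.card * (θ + 1) ≤ 2 * m := by
    calc S.card * (θ + 1) = ∑ _w ∈ S, (θ + 1) := by rw [Finset.sum_const, smul_eq_mul]
    _ ≤ ∑ w ∈ S, G.degree w := Finset.sum_le_sum (fun w hw => by
        simp only [hS, Finset.mem_filter] at hw; omega)
    _ ≤ ∑ w, G.degree w := Finset.sum_le_sum_of_subset (Finset.filter_subset _ _)
    _ = 2 * m := G.sum_degrees_eq_twice_card_edges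
  have h3S : 3 * S.card ≤ θ := by
    have : 3 * S.card * (θ + 1) ≤ θ * (θ + 1) := by nlinarith
    exact Nat.le_of_mul_le_mul_right this (by omega)
  have hsub : ((G.neighborFinset v).filter fun w => θ < G.degree w) ⊆ S := by
    intro w hw
    simp only [hS, Finset.mem_filter, Finset.mem_univ, true_and]
    exact (Finset.mem_filter.mp hw).2
  have hheavy : 3 * ((G.neighborFinset v).filter fun w => θ < G.degree w).card ≤ G.degree v := by
    have := Finset.card_le_card hsub
    omega
  have hd0 : (0:ℝ) < (G.degree v : ℝ) := by
    have : 0 < G.degree v := by omega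
    exact_mod_cast this
  constructor
  · have : (3 * ((G.neighborFinset v).filter fun w => θ < G.degree w).card : ℝ)
        ≤ (G.degree v : ℝ) := by exact_mod_cast hheavy
    push_cast at this ⊢
    linarith
  · have hsplit : ((G.neighborFinset v).filter fun w => θ < G.degree w).card
        + ((G.neighborFinset v).filter fun w => G.degree w ≤ θ).card = G.degree v := by
      have h := Finset.card_filter_add_card_filter_not
        (s := G.neighborFinset v) (p := fun w => θ < G.degree w)
      simpa [not_lt, G.card_neighborFinset_eq_degree] using h
    have hd : (0:ℝ) < (G.degree v : ℝ) := by
      have : 0 < G.degree v := by omega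
      exact_mod_cast this
    rw [le_div_iff₀ hd]
    have hcast : (((G.neighborFinset v).filter fun w => G.degree w ≤ θ).card : ℝ)
        = (G.degree v : ℝ) - (((G.neighborFinset v).filter fun w => θ < G.degree w).card : ℝ) := by
      have := hsplit
      push_cast [← this]
      ring
    rw [hcast]
    have h3 : (3 * ((G.neighborFinset v).filter fun w => θ < G.degree w).card : ℝ)
        ≤ (G.degree v : ℝ) := by exact_mod_cast hheavy
    push_cast at h3
    linarith
end

section
/- Let ε ∈ (0,1] and set θ = √(2m/ε). For every heavy vertex v (i.e., d(v) > θ), the quantity d_ℓ(v)/(n·θ·d(v)) lies in the interval [(1−ε)/(nθ), 1/(nθ)]. (This is the per-edge sampling probability of each heavy directed edge in the Eden–Rosenbaum sampling scheme.) -/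
/-- Let `ε ∈ (0,1]` and set `θ = √(2m/ε)`. For every heavy vertex `v`
(i.e., `d(v) > θ`), the quantity `d_ℓ(v)/(n·θ·d(v))` lies in the interval
`[(1−ε)/(nθ), 1/(nθ)]`. -/
theorem heavy_edge_sampling_probability_bounds {V : Type*} [Fintype V] [DecidableEq V]
    (G : SimpleGraph V) [DecidableRel G.Adj]
    (hn : 1 ≤ Fintype.card V) (hm : 1 ≤ G.edgeFinset.card)
    (ε : ℝ) (hε : ε ∈ Set.Ioc (0 : ℝ) 1)
    (θ : ℝ) (hθ : θ = Real.sqrt (2 * (G.edgeFinset.card : ℝ) / ε))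
    (v : V) (hv : θ < (G.degree v : ℝ)) :
    (((G.neighborFinset v).filter fun w => (G.degree w : ℝ) ≤ θ).card : ℝ)
        / ((Fintype.card V : ℝ) * θ * (G.degree v : ℝ))
      ∈ Set.Icc ((1 - ε) / ((Fintype.card V : ℝ) * θ))
          (1 / ((Fintype.card V : ℝ) * θ)) := by
  obtain ⟨hε0, hε1⟩ := hε
  have hm' : (0:ℝ) < (G.edgeFinset.card : ℝ) := by exact_mod_cast hm
  have hθpos : 0 < θ := by
    rw [hθ]
    exact Real.sqrt_pos.mpr (by positivity)
  have hθsq : θ ^ 2 = 2 * (G.edgeFinset.card : ℝ) / ε := by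
    rw [hθ, Real.sq_sqrt (by positivity)]
  have hnpos : (0:ℝ) < (Fintype.card V : ℝ) := by exact_mod_cast hn
  have hdpos : (0:ℝ) < (G.degree v : ℝ) := hθpos.trans hv
  set L := ((G.neighborFinset v).filter fun w => (G.degree w : ℝ) ≤ θ) with hL
  set H := ((G.neighborFinset v).filter fun w => ¬ ((G.degree w : ℝ) ≤ θ)) with hH
  have hsplit : L.card + H.card = G.degree v := by
    rw [hL, hH, Finset.card_filter_add_card_filter_not]
    exact G.card_neighborFinset_eq_degree v
  -- global heavy set
  set Hg := (Finset.univ.filter fun w : V => θ < (G.degree w : ℝ)) with hHg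
  have hsub : H ⊆ Hg := by
    intro w hw
    simp only [hH, Finset.mem_filter, not_le] at hw
    simp [hHg, hw.2]
  have hsum : θ * Hg.card ≤ 2 * (G.edgeFinset.card : ℝ) := by
    have h1 : θ * Hg.card ≤ ∑ w ∈ Hg, (G.degree w : ℝ) := by
      have := Finset.card_nsmul_le_sum Hg (fun w => (G.degree w : ℝ)) θ
        (fun w hw => le_of_lt (by simpa [hHg] using (Finset.mem_filter.mp hw).2))
      rw [nsmul_eq_mul] at this
      linarith
    have h2 : ∑ w ∈ Hg, (G.degree w : ℝ) ≤ ∑ w : V, (G.degree w : ℝ) :=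
      Finset.sum_le_sum_of_subset_of_nonneg (Finset.subset_univ _)
        (fun _ _ _ => by positivity)
    have h3 : ∑ w : V, (G.degree w : ℝ) = 2 * (G.edgeFinset.card : ℝ) := by
      have := G.sum_degrees_eq_twice_card_edges
      exact_mod_cast this
    linarith
  -- H.card ≤ ε * θ
  have hHle : (H.card : ℝ) ≤ ε * θ := by
    have h1 : (H.card : ℝ) ≤ (Hg.card : ℝ) := by exact_mod_cast Finset.card_le_card hsub
    have h2 : θ * Hg.card ≤ ε * θ * θ := by
      have : ε * θ * θ = 2 * (G.edgeFinset.card : ℝ) := by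
        have : ε * (θ ^ 2) = 2 * (G.edgeFinset.card : ℝ) := by
          rw [hθsq]; field_simp
        nlinarith [this]
      linarith [hsum, this.ge]
    have h3 : (Hg.card : ℝ) ≤ ε * θ := by
      nlinarith
    linarith
  have hLlb : (1 - ε) * (G.degree v : ℝ) ≤ (L.card : ℝ) := by
    have hcast : (L.card : ℝ) + (H.card : ℝ) = (G.degree v : ℝ) := by exact_mod_cast hsplit
    nlinarith [hHle, hv, hε0.le]
  have hLub : (L.card : ℝ) ≤ (G.degree v : ℝ) := by
    have hcast : (L.card : ℝ) + (H.card : ℝ) = (G.degree v : ℝ) := by exact_mod_cast hsplit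
    have : (0:ℝ) ≤ (H.card : ℝ) := by positivity
    linarith
  constructor
  · rw [div_le_div_iff₀ (by positivity) (by positivity)]
    nlinarith [mul_le_mul_of_nonneg_right hLlb (mul_pos hnpos hθpos).le]
  · rw [div_le_div_iff₀ (by positivity) (by positivity)]
    nlinarith [mul_le_mul_of_nonneg_right hLub (mul_pos hnpos hθpos).le]
end

section
/- For every light directed edge (u,v) of G (i.e., d(u) ≤ θ and v a neighbor of u), the probability that Algorithm 1 outputs (u,v) equals exactly 1/(3nθ), where θ = ⌈√(6m)⌉. -/
/-!
Condition on the seed `(u', j)` drawn in the first two steps. The `B = 0` branch only emits edges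
whose tail is heavy, so for a light `u` the edge `(u, v)` can only come from the `B = 1` branch,
and, `nbr u` being injective on `[0, d(u))`, only from the single seed `(u, j₀)` with
`nbr u j₀ = v`. That seed has probability `1/(nθ)`, and `B = 1` has probability `1/3`.
-/

open scoped ENNReal

/-- **Algorithm 1** of Eden–Rosenbaum / Tětek–Thorup, as a probability mass function on
`Option (V × V)`: draw `u` uniformly from `V`, draw `j` uniformly from `{0, …, θ−1}`,
and draw `B ∈ {0,1}` with `P(B = 1) = 1/3`, independently; if `d(u) > θ` or `j ≥ d(u)`,
output `none` (Fail); otherwise set `v = nbr u j`; if `B = 1`, output the directed edge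
`(u, v)`; if `B = 0` and `v` is heavy (`d(v) > θ`), draw `w` uniformly from the neighbors
of `v` and output `(v, w)`; in all other cases output `none`. -/
noncomputable def alg1 {V : Type*} [Fintype V] [DecidableEq V] [Nonempty V]
    (G : SimpleGraph V) [DecidableRel G.Adj] (θ : ℕ) (hθ : 0 < θ)
    (nbr : V → ℕ → V) : PMF (Option (V × V)) :=
  (PMF.uniformOfFintype V).bind fun u =>
    (PMF.uniformOfFinset (Finset.range θ) (Finset.nonempty_range_iff.mpr hθ.ne')).bind
      fun j =>
        (PMF.bernoulli (1 / 3) (by rw [← NNReal.coe_le_coe]; push_cast; norm_num)).bind fun B =>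
          if θ < G.degree u ∨ G.degree u ≤ j then PMF.pure none
          else
            if B then PMF.pure (some (u, nbr u j))
            else
              if h : θ < G.degree (nbr u j) then
                (PMF.uniformOfFinset (G.neighborFinset (nbr u j))
                  (Finset.card_pos.mp (Nat.lt_of_le_of_lt (Nat.zero_le θ) h))).bind
                  fun w => PMF.pure (some (nbr u j, w))
              else PMF.pure none

theorem PMF.bind_apply_eq_of_forall_ne {α β : Type*} {p : PMF α} {f : α → PMF β} {b : β}
    (a₀ : α) (h : ∀ a ≠ a₀, f a b = 0) : p.bind f b = p a₀ * f a₀ b := by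
  rw [PMF.bind_apply, tsum_eq_single a₀ fun a ha => by rw [h a ha, mul_zero]]

section Alg1

variable {V : Type*} [Fintype V] (G : SimpleGraph V) [DecidableRel G.Adj]
  (θ : ℕ) (nbr : V → ℕ → V)

noncomputable def alg1HeavyStep (v : V) : PMF (Option (V × V)) :=
  if h : θ < G.degree v then
    (PMF.uniformOfFinset (G.neighborFinset v)
      (Finset.card_pos.mp (Nat.lt_of_le_of_lt (Nat.zero_le θ) h))).bind
      fun w => PMF.pure (some (v, w))
  else PMF.pure none

set_option linter.deprecated false in
noncomputable def alg1Step (u : V) (j : ℕ) : PMF (Option (V × V)) :=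
  (PMF.bernoulli (1 / 3) (by rw [← NNReal.coe_le_coe]; push_cast; norm_num)).bind fun B =>
    if θ < G.degree u ∨ G.degree u ≤ j then PMF.pure none
    else if B then PMF.pure (some (u, nbr u j)) else alg1HeavyStep G θ (nbr u j)

theorem alg1_eq_bind_alg1Step [DecidableEq V] [Nonempty V] (hθ : 0 < θ) :
    alg1 G θ hθ nbr = (PMF.uniformOfFintype V).bind fun u =>
      (PMF.uniformOfFinset (Finset.range θ) (Finset.nonempty_range_iff.mpr hθ.ne')).bind
        (alg1Step G θ nbr u) :=
  rfl

variable {G θ}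

theorem alg1HeavyStep_apply_of_degree_le {u : V} (hu : G.degree u ≤ θ) (v w : V) :
    alg1HeavyStep G θ v (some (u, w)) = 0 := by
  unfold alg1HeavyStep
  split_ifs with hv
  · have hvu : v ≠ u := by rintro rfl; omega
    simp [hvu.symm]
  · simp

set_option linter.deprecated false in
theorem alg1Step_apply_of_injOn [DecidableEq V] {u : V} (hu : G.degree u ≤ θ)
    (hinj : Set.InjOn (nbr u) (Set.Iio (G.degree u))) {j₀ : ℕ} (hj₀ : j₀ < G.degree u)
    (u' : V) (j : ℕ) :
    alg1Step G θ nbr u' j (some (u, nbr u j₀)) = if u' = u ∧ j = j₀ then 3⁻¹ else 0 := by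
  rw [alg1Step, PMF.bind_apply, tsum_bool]
  simp only [PMF.bernoulli_apply, cond_false, cond_true, Bool.false_eq_true, if_false, if_true]
  by_cases hfail : θ < G.degree u' ∨ G.degree u' ≤ j
  · simp only [hfail, if_true, PMF.pure_apply, reduceCtorEq, if_false, mul_zero, add_zero]
    rw [if_neg]
    rintro ⟨rfl, rfl⟩
    omega
  · have hj : j < G.degree u' := by omega
    have hiff : (u = u' ∧ nbr u j₀ = nbr u' j) ↔ (u' = u ∧ j = j₀) := by
      constructor
      · rintro ⟨rfl, h⟩
        exact ⟨rfl, hinj hj hj₀ h.symm⟩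
      · rintro ⟨rfl, rfl⟩
        exact ⟨rfl, rfl⟩
    simp only [hfail, if_false, alg1HeavyStep_apply_of_degree_le hu, PMF.pure_apply,
      Option.some.injEq, Prod.mk.injEq, hiff, mul_zero, zero_add]
    split_ifs <;> simp

end Alg1

/-- For every light directed edge `(u,v)` of `G` (i.e., `d(u) ≤ θ` and
`v` a neighbor of `u`), the probability that Algorithm 1 outputs `(u,v)` equals exactly
`1/(3nθ)`, where `θ = ⌈√(6m)⌉`. -/
theorem alg1_light_edge_prob {V : Type*} [Fintype V] [DecidableEq V] [Nonempty V]
    (G : SimpleGraph V) [DecidableRel G.Adj]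
    (hm : 1 ≤ G.edgeFinset.card)
    (θ : ℕ) (hθ : θ = ⌈Real.sqrt (6 * (G.edgeFinset.card : ℝ))⌉₊)
    (nbr : V → ℕ → V)
    (hnbr : ∀ u : V, Set.BijOn (nbr u) (Set.Iio (G.degree u)) (G.neighborSet u))
    (u v : V) (huv : G.Adj u v) (hlight : G.degree u ≤ θ) :
    alg1 G θ
      (by subst hθ
          refine Nat.ceil_pos.mpr (Real.sqrt_pos.mpr ?_)
          exact_mod_cast Nat.mul_pos (by norm_num) hm)
      nbr (some (u, v))
      = 1 / (3 * (Fintype.card V : ℝ≥0∞) * (θ : ℝ≥0∞)) := by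
  obtain ⟨j₀, hj₀, rfl⟩ := (hnbr u).surjOn huv
  have hstep := alg1Step_apply_of_injOn nbr hlight (hnbr u).injOn hj₀
  rw [alg1_eq_bind_alg1Step, PMF.bind_apply_eq_of_forall_ne u fun u' hu' => by simp [hstep, hu'],
    PMF.bind_apply_eq_of_forall_ne j₀ fun j hj => by simp [hstep, hj], hstep, if_pos ⟨rfl, rfl⟩,
    PMF.uniformOfFintype_apply, PMF.uniformOfFinset_apply_of_mem (ha :=
      Finset.mem_range.mpr (hj₀.trans_le hlight)), Finset.card_range]
  rw [one_div, ENNReal.mul_inv (by simp) (.inl (by finiteness)),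
    ENNReal.mul_inv (by simp) (by simp)]
  ring
end
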